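/- Let p_1 : E_1 → B_1 and p_2 : E_2 → B_2 be fibrations with B_1 and B_2 normal spaces. Then secat_m(p_1 × p_2) ≤ secat_m(p_1) + secat_m(p_2), where p_1 × p_2 : E_1 × E_2 → B_1 × B_2 is the product fibration. -/

import Mathlib

universe u

/-! Reconstruction of the December 2024 Mathlib definitions of (relative) CW complexes
(`Mathlib/Topology/CWComplex.lean`), which have since been removed from Mathlib. -/

namespace RelativeCWComplex

/-- The `n-1`-dimensional sphere: the unit sphere in `ℝⁿ`. -/
noncomputable def sphere (n : ℤ) : TopCat.{u} :=
  TopCat.of <| ULift <| Metric.sphere (0 : EuclideanSpace ℝ <| Fin <| n.toNat) 1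

/-- The `n`-dimensional closed disk: the closed unit ball in `ℝⁿ`. -/
noncomputable def disk (n : ℤ) : TopCat.{u} :=
  TopCat.of <| ULift <| Metric.closedBall (0 : EuclideanSpace ℝ <| Fin <| n.toNat) 1

/-- The inclusion of the boundary sphere `S^{n-1}` into the disk `D^n`. -/
noncomputable def sphereInclusion (n : ℤ) : sphere.{u} n ⟶ disk.{u} n :=
  TopCat.ofHom ⟨fun x => ⟨⟨x.down.1, Metric.sphere_subset_closedBall x.down.2⟩⟩, by fun_prop⟩

/-- `X'` is obtained from `X` by attaching generalized cells `f : S ⟶ D`. -/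
structure AttachGeneralizedCells {S D : TopCat.{u}} (f : S ⟶ D) (X X' : TopCat.{u}) where
  /-- The index type over the generalized cells -/
  cells : Type u
  /-- An attaching map for each generalized cell -/
  attachMaps : cells → (S ⟶ X)
  /-- `X'` is the pushout of `∐ S ⟶ X` and `∐ S ⟶ ∐ D`. -/
  iso_pushout : X' ≅ CategoryTheory.Limits.pushout (CategoryTheory.Limits.Sigma.desc attachMaps)
    (CategoryTheory.Limits.Sigma.map fun _ ↦ f)

end RelativeCWComplex

/-- A relative CW-complex: `sk (n + 1)` is obtained from `sk n` by attaching `n`-disks. -/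
structure RelativeCWComplex where
  /-- The skeletons. -/
  sk : ℕ → TopCat.{u}
  /-- Each `sk (n + 1)` is obtained from `sk n` by attaching `n`-disks. -/
  attachCells (n : ℕ) :
    RelativeCWComplex.AttachGeneralizedCells.{u} (RelativeCWComplex.sphereInclusion (n : ℤ))
      (sk n) (sk (n + 1))

/-- A CW-complex is a relative CW-complex whose `sk 0` is empty. -/
structure CWComplex extends RelativeCWComplex.{u} where
  /-- `sk 0` is empty. -/
  isEmpty_sk_zero : IsEmpty (sk 0)

namespace RelativeCWComplex

/-- The inclusion `X ⟶ X'` when `X'` is obtained from `X` by attaching generalized cells. -/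
noncomputable def AttachGeneralizedCells.inclusion {S D : TopCat.{u}} {f : S ⟶ D}
    {X X' : TopCat.{u}} (att : AttachGeneralizedCells f X X') : X ⟶ X' :=
  CategoryTheory.CategoryStruct.comp (CategoryTheory.Limits.pushout.inl _ _) att.iso_pushout.inv

/-- The inclusion of `sk n` into `sk (n + 1)`. -/
noncomputable def skInclusion (X : RelativeCWComplex.{u}) (n : ℕ) : X.sk n ⟶ X.sk (n + 1) :=
  (X.attachCells n).inclusion

/-- The topological space of a relative CW-complex: the colimit of its skeleta. -/
noncomputable def toTopCat (X : RelativeCWComplex.{u}) : TopCat.{u} :=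
  CategoryTheory.Limits.colimit (CategoryTheory.Functor.ofSequence X.skInclusion)

end RelativeCWComplex

/-- The underlying topological space of a CW complex. -/
abbrev CWSpace (K : CWComplex.{u}) : Type u := K.toRelativeCWComplex.toTopCat

/-- A CW complex has dimension at most `m` if it has no cells of dimension `> m`. -/
def CWDimLE (K : CWComplex.{u}) (m : ℕ) : Prop :=
  ∀ n : ℕ, m < n →
    IsEmpty (RelativeCWComplex.AttachGeneralizedCells.cells (K.toRelativeCWComplex.attachCells n))

/-- Hurewicz fibration: the homotopy lifting property with respect to all spaces. -/
def IsFibration {E B : Type u} [TopologicalSpace E] [TopologicalSpace B] (p : C(E, B)) : Prop :=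
  ∀ (X : Type u) [TopologicalSpace X] (f : C(X, E)) (H : C(X × unitInterval, B)),
    (∀ x, H (x, 0) = p (f x)) →
    ∃ H' : C(X × unitInterval, E), (∀ z, p (H' z) = H z) ∧ (∀ x, H' (x, 0) = f x)

/-- The inclusion of a subset as a continuous map. -/
def inclMap {X : Type u} [TopologicalSpace X] (U : Set X) : C(U, X) :=
  ⟨Subtype.val, continuous_subtype_val⟩

/-- Property `A_{m,p}`: every map into `U` from an `m`-dimensional CW complex lifts through `p`. -/
def LiftingProp {E B : Type u} [TopologicalSpace E] [TopologicalSpace B]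
    (p : C(E, B)) (m : ℕ) (U : Set B) : Prop :=
  ∀ K : CWComplex.{u}, CWDimLE K m → ∀ φ : C(CWSpace K, U),
    ∃ s : C(CWSpace K, E), ∀ x, p (s x) = (φ x : B)

/-- The `m`-sectional category of `p`, valued in `ℕ∞` (`⊤` if no finite cover exists). -/
noncomputable def secatm {E B : Type u} [TopologicalSpace E] [TopologicalSpace B]
    (p : C(E, B)) (m : ℕ) : ℕ∞ :=
  sInf ((fun n : ℕ => (n : ℕ∞)) ''
    {k : ℕ | ∃ U : Fin (k + 1) → Set B, (∀ i, IsOpen (U i)) ∧ (⋃ i, U i) = Set.univ ∧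
      ∀ i, LiftingProp p m (U i)})

/-- The classical sectional category. -/
noncomputable def secat {E B : Type u} [TopologicalSpace E] [TopologicalSpace B]
    (p : C(E, B)) : ℕ∞ :=
  sInf ((fun n : ℕ => (n : ℕ∞)) ''
    {k : ℕ | ∃ U : Fin (k + 1) → Set B, (∀ i, IsOpen (U i)) ∧ (⋃ i, U i) = Set.univ ∧
      ∀ i, ∃ s : C((U i : Set B), E), ∀ x, p (s x) = (x : B)})

/-- Property `B_m`. -/
def NullProp {X : Type u} [TopologicalSpace X] (m : ℕ) (U : Set X) : Prop :=
  ∀ K : CWComplex.{u}, CWDimLE K m → ∀ φ : C(CWSpace K, U),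
    ((inclMap U).comp φ).Nullhomotopic

/-- The `m`-dimensional Lusternik–Schnirelmann category. -/
noncomputable def catm (X : Type u) [TopologicalSpace X] (m : ℕ) : ℕ∞ :=
  sInf ((fun n : ℕ => (n : ℕ∞)) ''
    {k : ℕ | ∃ U : Fin (k + 1) → Set X, (∀ i, IsOpen (U i)) ∧ (⋃ i, U i) = Set.univ ∧
      ∀ i, NullProp m (U i)})

/-- Classical (normalized) LS category. -/
noncomputable def catLS (X : Type u) [TopologicalSpace X] : ℕ∞ :=
  sInf ((fun n : ℕ => (n : ℕ∞)) ''
    {k : ℕ | ∃ U : Fin (k + 1) → Set X, (∀ i, IsOpen (U i)) ∧ (⋃ i, U i) = Set.univ ∧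
      ∀ i, (inclMap (U i)).Nullhomotopic})

/-- Property `C_{m,f}`. -/
def NullPropMap {X Y : Type u} [TopologicalSpace X] [TopologicalSpace Y]
    (f : C(X, Y)) (m : ℕ) (U : Set X) : Prop :=
  ∀ K : CWComplex.{u}, CWDimLE K m → ∀ φ : C(CWSpace K, U),
    ((f.comp (inclMap U)).comp φ).Nullhomotopic

/-- The `m`-dimensional LS category of a map. -/
noncomputable def catmMap {X Y : Type u} [TopologicalSpace X] [TopologicalSpace Y]
    (f : C(X, Y)) (m : ℕ) : ℕ∞ :=
  sInf ((fun n : ℕ => (n : ℕ∞)) ''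
    {k : ℕ | ∃ U : Fin (k + 1) → Set X, (∀ i, IsOpen (U i)) ∧ (⋃ i, U i) = Set.univ ∧
      ∀ i, NullPropMap f m (U i)})

/-- Property `D_{m,f,g}`. -/
def DistProp {X Y : Type u} [TopologicalSpace X] [TopologicalSpace Y]
    (f g : C(X, Y)) (m : ℕ) (U : Set X) : Prop :=
  ∀ K : CWComplex.{u}, CWDimLE K m → ∀ φ : C(CWSpace K, U),
    ((f.comp (inclMap U)).comp φ).Homotopic ((g.comp (inclMap U)).comp φ)

/-- The `m`-homotopic distance. -/
noncomputable def homDistm {X Y : Type u} [TopologicalSpace X] [TopologicalSpace Y]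
    (f g : C(X, Y)) (m : ℕ) : ℕ∞ :=
  sInf ((fun n : ℕ => (n : ℕ∞)) ''
    {k : ℕ | ∃ U : Fin (k + 1) → Set X, (∀ i, IsOpen (U i)) ∧ (⋃ i, U i) = Set.univ ∧
      ∀ i, DistProp f g m (U i)})

/-- Monotonicity of the lifting property. -/
lemma liftingProp_mono {E B : Type u} [TopologicalSpace E] [TopologicalSpace B]
    {p : C(E, B)} {m : ℕ} {U V : Set B} (hUV : V ⊆ U) (h : LiftingProp p m U) :
    LiftingProp p m V := by
  intro K hK φ
  obtain ⟨s, hs⟩ := h K hK ((⟨Set.inclusion hUV, continuous_inclusion hUV⟩ : C(V, U)).comp φ)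
  exact ⟨s, fun x => hs x⟩

/-- Lifting property for products. -/
lemma liftingProp_prod {E₁ B₁ E₂ B₂ : Type u} [TopologicalSpace E₁] [TopologicalSpace B₁]
    [TopologicalSpace E₂] [TopologicalSpace B₂] {p₁ : C(E₁, B₁)} {p₂ : C(E₂, B₂)} {m : ℕ}
    {U : Set B₁} {V : Set B₂} (hU : LiftingProp p₁ m U) (hV : LiftingProp p₂ m V) :
    LiftingProp (p₁.prodMap p₂) m (U ×ˢ V) := by
  intro K hK φ
  obtain ⟨s₁, hs₁⟩ := hU K hK
    ⟨fun x => ⟨(φ x : B₁ × B₂).1, (φ x).2.1⟩,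
      (continuous_fst.comp (continuous_subtype_val.comp φ.continuous)).subtype_mk _⟩
  obtain ⟨s₂, hs₂⟩ := hV K hK
    ⟨fun x => ⟨(φ x : B₁ × B₂).2, (φ x).2.2⟩,
      (continuous_snd.comp (continuous_subtype_val.comp φ.continuous)).subtype_mk _⟩
  refine ⟨⟨fun x => (s₁ x, s₂ x), (s₁.continuous.prodMk s₂.continuous)⟩, fun x => ?_⟩
  have h1 := hs₁ x
  have h2 := hs₂ x
  simp only [ContinuousMap.coe_mk] at h1 h2 ⊢
  simp [ContinuousMap.prodMap, h1, h2]

/-- The lifting property glues over finite disjoint unions of open sets. -/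
lemma liftingProp_disjUnion {E B : Type u} [TopologicalSpace E] [TopologicalSpace B]
    {p : C(E, B)} {m : ℕ} {ι : Type} [Finite ι] {O : ι → Set B}
    (hopen : ∀ a, IsOpen (O a)) (hdisj : Pairwise (Function.onFun Disjoint O))
    (hl : ∀ a, LiftingProp p m (O a)) : LiftingProp p m (⋃ a, O a) := by
  classical
  intro K hK φ
  set c : CWSpace K → B := fun x => (φ x : B) with hc
  have hcc : Continuous c := continuous_subtype_val.comp φ.continuous
  have hmem : ∀ x, ∃ a, c x ∈ O a := fun x => Set.mem_iUnion.mp (φ x).2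
  set j : CWSpace K → ι := fun x => (hmem x).choose with hjdef
  have hj : ∀ x, c x ∈ O (j x) := fun x => (hmem x).choose_spec
  have huniq : ∀ x a, c x ∈ O a → j x = a := by
    intro x a hxa
    by_contra hne
    exact Set.disjoint_left.mp (hdisj hne) (hj x) hxa
  set A : ι → Set (CWSpace K) := fun a => c ⁻¹' (O a) with hA
  have hAopen : ∀ a, IsOpen (A a) := fun a => (hopen a).preimage hcc
  have hAclopen : ∀ a, IsClopen (A a) := by
    intro a
    refine ⟨?_, hAopen a⟩
    rw [← isOpen_compl_iff]
    have : (A a)ᶜ = ⋃ b, ⋃ (_ : b ≠ a), A b := by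
      ext x
      simp only [Set.mem_compl_iff, Set.mem_iUnion, hA, Set.mem_preimage]
      constructor
      · intro hx
        exact ⟨j x, fun h => hx (h ▸ hj x), hj x⟩
      · rintro ⟨b, hba, hxb⟩ hxa
        exact hba (((huniq x b hxb).symm.trans (huniq x a hxa)))
    rw [this]
    exact isOpen_iUnion fun b => isOpen_iUnion fun _ => hAopen b
  -- lifts on each piece
  have key : ∀ a : ι, ∃ s : C(CWSpace K, E), ∀ x ∈ A a, p (s x) = c x := by
    intro a
    rcases (A a).eq_empty_or_nonempty with hemp | ⟨x₀, hx₀⟩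
    · rcases isEmpty_or_nonempty (CWSpace K) with hKe | hKn
      · refine ⟨⟨fun x => isEmptyElim x, ?_⟩, fun x hx => isEmptyElim x⟩
        have : ∀ s : Set E, (fun x : CWSpace K => (isEmptyElim x : E)) ⁻¹' s = ∅ :=
          fun s => Set.eq_empty_of_isEmpty _
        exact ⟨fun s _ => by rw [this]; exact isOpen_empty⟩
      · -- K nonempty, so E nonempty via a lift over O (j x₁); use a constant map
        obtain ⟨x₁⟩ := hKn
        obtain ⟨s₁, _⟩ := (hl (j x₁)) K hK
          ⟨fun _ => ⟨c x₁, hj x₁⟩, continuous_const⟩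
        refine ⟨⟨fun _ => s₁ x₁, continuous_const⟩, fun x hx => ?_⟩
        rw [hemp] at hx
        exact absurd hx (Set.notMem_empty x)
    · -- A a nonempty: modify φ to land in O a
      set v : CWSpace K → B := fun x => if x ∈ A a then c x else c x₀ with hv
      have hvc : Continuous v := by
        refine Continuous.if ?_ hcc continuous_const
        intro x hx
        have : frontier (A a) = ∅ := (hAclopen a).frontier_eq
        have hx' : x ∈ frontier (A a) := hx
        rw [this] at hx'
        exact absurd hx' (Set.notMem_empty x)
      have hvm : ∀ x, v x ∈ O a := by
        intro x
        by_cases hx : x ∈ A a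
        · simp only [hv, if_pos hx]
          exact hx
        · simp only [hv, if_neg hx]
          exact hx₀
      obtain ⟨s, hs⟩ := (hl a) K hK ⟨fun x => ⟨v x, hvm x⟩, hvc.subtype_mk _⟩
      refine ⟨s, fun x hx => ?_⟩
      have := hs x
      simpa [hv, hx] using this
  set G : ι → C(CWSpace K, E) := fun a => (key a).choose with hG
  have hGspec : ∀ a, ∀ x ∈ A a, p (G a x) = c x := fun a => (key a).choose_spec
  set s : CWSpace K → E := fun x => G (j x) x with hsdef
  have hscont : Continuous s := by
    rw [continuous_iff_continuousAt]
    intro x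
    have hx : x ∈ A (j x) := hj x
    refine ContinuousAt.congr ((G (j x)).continuous.continuousAt) ?_
    filter_upwards [(hAopen (j x)).mem_nhds hx] with y hy
    have : j y = j x := huniq y (j x) hy
    simp [hsdef, this]
  exact ⟨⟨s, hscont⟩, fun x => hGspec (j x) x (hj x)⟩

/-- In a normal space, a finite open cover admits continuous "bump" functions. -/
lemma exists_bumps {X : Type u} [TopologicalSpace X] [NormalSpace X] {n : ℕ}
    {U : Fin n → Set X} (ho : ∀ i, IsOpen (U i)) (hc : (⋃ i, U i) = Set.univ) :
    ∃ f : Fin n → C(X, ℝ), (∀ i x, 0 ≤ f i x) ∧ (∀ i x, 0 < f i x → x ∈ U i) ∧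
      (∀ x, ∃ i, 0 < f i x) := by
  obtain ⟨v, hv, hvo, hvc⟩ := exists_subset_iUnion_closure_subset (isClosed_univ (X := X)) ho
    (fun x _ => Set.toFinite _) (by rw [hc])
  have hf : ∀ i : Fin n, ∃ f : C(X, ℝ), Set.EqOn f 0 (U i)ᶜ ∧ Set.EqOn f 1 (closure (v i)) ∧
      ∀ x, f x ∈ Set.Icc (0 : ℝ) 1 := by
    intro i
    exact exists_continuous_zero_one_of_isClosed (ho i).isClosed_compl isClosed_closure
      (Set.disjoint_compl_left_iff_subset.mpr (hvc i))
  choose f hf0 hf1 hf01 using hf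
  refine ⟨f, fun i x => (hf01 i x).1, fun i x hx => ?_, fun x => ?_⟩
  · by_contra hxu
    have : f i x = 0 := hf0 i hxu
    rw [this] at hx
    exact lt_irrefl 0 hx
  · obtain ⟨_, ⟨i, rfl⟩, hxv⟩ := hv (Set.mem_univ x)
    exact ⟨i, by rw [hf1 i (subset_closure hxv)]; norm_num⟩

/-- Combining covers for the product. -/
lemma cover_combine {E₁ B₁ E₂ B₂ : Type u} [TopologicalSpace E₁] [TopologicalSpace B₁]
    [TopologicalSpace E₂] [TopologicalSpace B₂] [NormalSpace B₁] [NormalSpace B₂]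
    {p₁ : C(E₁, B₁)} {p₂ : C(E₂, B₂)} {m k l : ℕ}
    {U : Fin (k + 1) → Set B₁} (hUo : ∀ i, IsOpen (U i)) (hUc : (⋃ i, U i) = Set.univ)
    (hUl : ∀ i, LiftingProp p₁ m (U i))
    {V : Fin (l + 1) → Set B₂} (hVo : ∀ i, IsOpen (V i)) (hVc : (⋃ i, V i) = Set.univ)
    (hVl : ∀ i, LiftingProp p₂ m (V i)) :
    ∃ W : Fin (k + l + 1) → Set (B₁ × B₂), (∀ n, IsOpen (W n)) ∧ (⋃ n, W n) = Set.univ ∧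
      ∀ n, LiftingProp (p₁.prodMap p₂) m (W n) := by
  classical
  obtain ⟨f, hf0, hfU, hfpos⟩ := exists_bumps hUo hUc
  obtain ⟨g, hg0, hgV, hgpos⟩ := exists_bumps hVo hVc
  set h : Fin (k + 1) → Fin (l + 1) → B₁ × B₂ → ℝ :=
    fun i j z => f i z.1 * g j z.2 with hh
  have hhc : ∀ i j, Continuous (h i j) :=
    fun i j => ((f i).continuous.comp continuous_fst).mul ((g j).continuous.comp continuous_snd)
  have hh0 : ∀ i j z, 0 ≤ h i j z := fun i j z => mul_nonneg (hf0 i z.1) (hg0 j z.2)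
  set M : Fin (k + 1) → Fin (l + 1) → Set (B₁ × B₂) :=
    fun i j => {z | 0 < h i j z ∧ ∀ (a : Fin (k + 1)) (b : Fin (l + 1)),
      (a : ℕ) + (b : ℕ) = (i : ℕ) + (j : ℕ) → (a, b) ≠ (i, j) → h a b z < h i j z} with hM
  have hMopen : ∀ i j, IsOpen (M i j) := by
    intro i j
    have : M i j = {z | 0 < h i j z} ∩ ⋂ (a : Fin (k + 1)), ⋂ (b : Fin (l + 1)),
        {z | (a : ℕ) + (b : ℕ) = (i : ℕ) + (j : ℕ) → (a, b) ≠ (i, j) → h a b z < h i j z} := by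
      ext z
      simp only [hM, Set.mem_setOf_eq, Set.mem_inter_iff, Set.mem_iInter]
    rw [this]
    refine (isOpen_lt continuous_const (hhc i j)).inter
      (isOpen_iInter_of_finite fun a => isOpen_iInter_of_finite fun b => ?_)
    by_cases hp : (a : ℕ) + (b : ℕ) = (i : ℕ) + (j : ℕ) ∧ (a, b) ≠ (i, j)
    · have : {z | (a : ℕ) + (b : ℕ) = (i : ℕ) + (j : ℕ) → (a, b) ≠ (i, j) → h a b z < h i j z}
          = {z | h a b z < h i j z} := by
        ext z; simp [hp.1, hp.2]
      rw [this]
      exact isOpen_lt (hhc a b) (hhc i j)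
    · have : {z | (a : ℕ) + (b : ℕ) = (i : ℕ) + (j : ℕ) → (a, b) ≠ (i, j) → h a b z < h i j z}
          = Set.univ := by
        ext z
        simp only [Set.mem_setOf_eq, Set.mem_univ, iff_true]
        intro h1 h2
        exact absurd ⟨h1, h2⟩ hp
      rw [this]
      exact isOpen_univ
  have hMsub : ∀ i j, M i j ⊆ U i ×ˢ V j := by
    intro i j z hz
    have hpos : 0 < f i z.1 * g j z.2 := hz.1
    rcases mul_pos_iff.mp hpos with ⟨hf', hg'⟩ | ⟨hf', hg'⟩
    · exact ⟨hfU i z.1 hf', hgV j z.2 hg'⟩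
    · exact absurd hf' (not_lt.mpr (hf0 i z.1))
  set W : Fin (k + l + 1) → Set (B₁ × B₂) :=
    fun n => ⋃ (q : Fin (k + 1) × Fin (l + 1)),
      ⋃ (_ : (q.1 : ℕ) + (q.2 : ℕ) = (n : ℕ)), M q.1 q.2 with hW
  refine ⟨W, fun n => isOpen_iUnion fun q => isOpen_iUnion fun _ => hMopen q.1 q.2, ?_, ?_⟩
  · -- cover
    rw [Set.eq_univ_iff_forall]
    intro z
    have h1 : {i : Fin (k + 1) | 0 < f i z.1}.Nonempty := hfpos z.1
    have h2 : {j : Fin (l + 1) | 0 < g j z.2}.Nonempty := hgpos z.2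
    set s1 := (Finset.univ.filter (fun i : Fin (k + 1) => 0 < f i z.1))
    set s2 := (Finset.univ.filter (fun j : Fin (l + 1) => 0 < g j z.2))
    have hs1 : s1.Nonempty := by obtain ⟨i, hi⟩ := h1; exact ⟨i, by simp only [s1, Finset.mem_filter, Finset.mem_univ, true_and]; exact hi⟩
    have hs2 : s2.Nonempty := by obtain ⟨j, hj⟩ := h2; exact ⟨j, by simp only [s2, Finset.mem_filter, Finset.mem_univ, true_and]; exact hj⟩
    set i₀ := s1.min' hs1
    set j₀ := s2.min' hs2
    have hi₀ : 0 < f i₀ z.1 := by have := s1.min'_mem hs1; simpa [s1] using this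
    have hj₀ : 0 < g j₀ z.2 := by have := s2.min'_mem hs2; simpa [s2] using this
    have hi₀min : ∀ a : Fin (k + 1), a < i₀ → f a z.1 = 0 := by
      intro a ha
      by_contra hne
      have hpos : 0 < f a z.1 := lt_of_le_of_ne (hf0 a z.1) (Ne.symm hne)
      have : i₀ ≤ a := s1.min'_le a (by simp [s1, hpos])
      exact absurd ha (not_lt.mpr this)
    have hj₀min : ∀ b : Fin (l + 1), b < j₀ → g b z.2 = 0 := by
      intro b hb
      by_contra hne
      have hpos : 0 < g b z.2 := lt_of_le_of_ne (hg0 b z.2) (Ne.symm hne)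
      have : j₀ ≤ b := s2.min'_le b (by simp [s2, hpos])
      exact absurd hb (not_lt.mpr this)
    have hnlt : (i₀ : ℕ) + (j₀ : ℕ) < k + l + 1 := by
      have := i₀.isLt; have := j₀.isLt; omega
    have hzM : z ∈ M i₀ j₀ := by
      refine ⟨mul_pos hi₀ hj₀, fun a b hab hne => ?_⟩
      have : (a : ℕ) < (i₀ : ℕ) ∨ (b : ℕ) < (j₀ : ℕ) := by
        by_contra hcon
        push_neg at hcon
        have ha : (a : ℕ) = (i₀ : ℕ) := by omega
        have hb : (b : ℕ) = (j₀ : ℕ) := by omega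
        exact hne (by rw [Prod.ext_iff]; exact ⟨Fin.ext ha, Fin.ext hb⟩)
      have hz0 : h a b z = 0 := by
        show f a z.1 * g b z.2 = 0
        rcases this with hlt | hlt
        · rw [hi₀min a (Fin.lt_def.mpr hlt)]; ring
        · rw [hj₀min b (Fin.lt_def.mpr hlt)]; ring
      rw [hz0]
      exact mul_pos hi₀ hj₀
    refine Set.mem_iUnion.mpr ⟨⟨(i₀ : ℕ) + (j₀ : ℕ), hnlt⟩, ?_⟩
    exact Set.mem_iUnion.mpr ⟨(i₀, j₀), Set.mem_iUnion.mpr ⟨rfl, hzM⟩⟩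
  · -- lifting property
    intro n
    set O : Fin (k + 1) × Fin (l + 1) → Set (B₁ × B₂) :=
      fun q => if (q.1 : ℕ) + (q.2 : ℕ) = (n : ℕ) then M q.1 q.2 else ∅ with hO
    have hWO : W n = ⋃ q, O q := by
      ext z
      simp only [hW, hO, Set.mem_iUnion]
      constructor
      · rintro ⟨q, hq, hz⟩; exact ⟨q, by rw [if_pos hq]; exact hz⟩
      · rintro ⟨q, hz⟩
        by_cases hq : (q.1 : ℕ) + (q.2 : ℕ) = (n : ℕ)
        · rw [if_pos hq] at hz; exact ⟨q, hq, hz⟩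
        · rw [if_neg hq] at hz; exact absurd hz (Set.notMem_empty z)
    rw [hWO]
    refine liftingProp_disjUnion (ι := Fin (k + 1) × Fin (l + 1)) ?_ ?_ ?_
    · intro q
      by_cases hq : (q.1 : ℕ) + (q.2 : ℕ) = (n : ℕ)
      · rw [hO]; simp only [if_pos hq]; exact hMopen q.1 q.2
      · rw [hO]; simp only [if_neg hq]; exact isOpen_empty
    · intro q r hqr
      by_cases hq : (q.1 : ℕ) + (q.2 : ℕ) = (n : ℕ)
      · by_cases hr : (r.1 : ℕ) + (r.2 : ℕ) = (n : ℕ)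
        · simp only [Function.onFun, hO, if_pos hq, if_pos hr]
          rw [Set.disjoint_left]
          intro z hzq hzr
          have h1 : h r.1 r.2 z < h q.1 q.2 z := by
            refine hzq.2 r.1 r.2 (by omega) ?_
            intro hcon
            exact hqr (Prod.ext_iff.mpr ⟨congrArg Prod.fst hcon, congrArg Prod.snd hcon⟩).symm
          have h2 : h q.1 q.2 z < h r.1 r.2 z := by
            refine hzr.2 q.1 q.2 (by omega) ?_
            intro hcon
            exact hqr (Prod.ext_iff.mpr ⟨congrArg Prod.fst hcon, congrArg Prod.snd hcon⟩)
          exact absurd (h1.trans h2) (lt_irrefl _)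
        · simp only [Function.onFun, hO, if_neg hr]
          exact Set.disjoint_empty _
      · simp only [Function.onFun, hO, if_neg hq]
        exact Set.empty_disjoint _
    · intro q
      by_cases hq : (q.1 : ℕ) + (q.2 : ℕ) = (n : ℕ)
      · rw [hO]; simp only [if_pos hq]
        exact liftingProp_mono (hMsub q.1 q.2) (liftingProp_prod (hUl q.1) (hVl q.2))
      · rw [hO]; simp only [if_neg hq]
        exact liftingProp_mono (Set.empty_subset _)
          (liftingProp_prod (hUl 0) (hVl 0))

/-- Product inequality for the `m`-sectional category. -/
theorem stmt5 {E₁ B₁ E₂ B₂ : Type u} [TopologicalSpace E₁] [TopologicalSpace B₁]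
    [TopologicalSpace E₂] [TopologicalSpace B₂] [NormalSpace B₁] [NormalSpace B₂]
    (p₁ : C(E₁, B₁)) (p₂ : C(E₂, B₂)) (h₁ : IsFibration p₁) (h₂ : IsFibration p₂) (m : ℕ) :
    secatm (p₁.prodMap p₂) m ≤ secatm p₁ m + secatm p₂ m := by
  classical
  rcases Set.eq_empty_or_nonempty {k : ℕ | ∃ U : Fin (k + 1) → Set B₁,
      (∀ i, IsOpen (U i)) ∧ (⋃ i, U i) = Set.univ ∧ ∀ i, LiftingProp p₁ m (U i)} with he₁ | hne₁
  · have ht : secatm p₁ m = ⊤ := by rw [secatm, he₁, Set.image_empty, sInf_empty]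
    rw [ht, top_add]; exact le_top
  rcases Set.eq_empty_or_nonempty {k : ℕ | ∃ V : Fin (k + 1) → Set B₂,
      (∀ i, IsOpen (V i)) ∧ (⋃ i, V i) = Set.univ ∧ ∀ i, LiftingProp p₂ m (V i)} with he₂ | hne₂
  · have ht : secatm p₂ m = ⊤ := by rw [secatm, he₂, Set.image_empty, sInf_empty]
    rw [ht, add_top]; exact le_top
  set k := sInf {k : ℕ | ∃ U : Fin (k + 1) → Set B₁,
      (∀ i, IsOpen (U i)) ∧ (⋃ i, U i) = Set.univ ∧ ∀ i, LiftingProp p₁ m (U i)} with hkdef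
  set l := sInf {k : ℕ | ∃ V : Fin (k + 1) → Set B₂,
      (∀ i, IsOpen (V i)) ∧ (⋃ i, V i) = Set.univ ∧ ∀ i, LiftingProp p₂ m (V i)} with hldef
  obtain ⟨U, hUo, hUc, hUl⟩ := Nat.sInf_mem hne₁
  obtain ⟨V, hVo, hVc, hVl⟩ := Nat.sInf_mem hne₂
  obtain ⟨W, hWo, hWc, hWl⟩ := cover_combine hUo hUc hUl hVo hVc hVl
  have hmem : (k + l) ∈ {n : ℕ | ∃ W : Fin (n + 1) → Set (B₁ × B₂),
      (∀ i, IsOpen (W i)) ∧ (⋃ i, W i) = Set.univ ∧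
        ∀ i, LiftingProp (p₁.prodMap p₂) m (W i)} := ⟨W, hWo, hWc, hWl⟩
  have hle : secatm (p₁.prodMap p₂) m ≤ ((k + l : ℕ) : ℕ∞) := by
    rw [secatm]
    exact sInf_le ⟨k + l, hmem, rfl⟩
  have hk1 : ((k : ℕ) : ℕ∞) ≤ secatm p₁ m := by
    rw [secatm]
    refine le_sInf ?_
    rintro x ⟨n, hn, rfl⟩
    have := Nat.sInf_le hn
    rw [← hkdef] at this
    simp only []
    exact_mod_cast this
  have hl1 : ((l : ℕ) : ℕ∞) ≤ secatm p₂ m := by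
    rw [secatm]
    refine le_sInf ?_
    rintro x ⟨n, hn, rfl⟩
    have := Nat.sInf_le hn
    rw [← hldef] at this
    simp only []
    exact_mod_cast this
  calc secatm (p₁.prodMap p₂) m ≤ ((k + l : ℕ) : ℕ∞) := hle
    _ = ((k : ℕ) : ℕ∞) + ((l : ℕ) : ℕ∞) := by exact_mod_cast Nat.cast_add k l
    _ ≤ secatm p₁ m + secatm p₂ m := add_le_add hk1 hl1
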